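/- arXiv:0803.0031 — 2 statements merged into one kernel-verified Lean document; each statement's English description precedes it below -/
import Mathlib

section
/- Let V be a finite-dimensional vector space with a bilinear form χ, and let v_0,…,v_n be a semiorthonormal basis (χ(v_i,v_j)=0 for i>j, χ(v_k,v_k)=1). Let A be the matrix of χ in this basis, let χ_s be the symmetrization χ_s(w1,w2)=χ(w1,w2)+χ(w2,w1), and let I_j : v ↦ v − χ_s(v,v_j)v_j be the reflection with respect to v_j. Then the matrix of the composite I_0 I_1 ⋯ I_n in this basis equals −A⁻¹Aᵗ. -/
/-!
Write `s_x v = v - (χ v x + χ x v) • x`. Along the semiorthonormal basis, `s_j` fixes `χ (b i) ·`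
for `j < i` and `χ · (b i)` for `j > i`, while `χ (b i) (s_i v) = -χ v (b i)` because
`χ (b i) (b i) = 1`. Hence `C = s_0 ⋯ s_n` satisfies `χ (b i) (C v) = -χ v (b i)`, i.e.
`A * [C] = -Aᵀ`, and `A` is unitriangular, so invertible.
-/

open Matrix
open LinearMap (BilinForm)

namespace LinearMap.BilinForm

variable {R M : Type*} [CommRing R] [AddCommGroup M] [Module R M] (B : BilinForm R M)

def symmReflection (x : M) : M →ₗ[R] M :=
  LinearMap.id - (B.flip x + B x).smulRight x

@[simp]
lemma symmReflection_apply (x v : M) :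
    B.symmReflection x v = v - (B v x + B x v) • x := rfl

lemma apply_symmReflection_left {x y : M} (h : B x y = 0) (v : M) :
    B (B.symmReflection x v) y = B v y := by
  simp [h]

lemma apply_symmReflection_right {x y : M} (h : B y x = 0) (v : M) :
    B y (B.symmReflection x v) = B y v := by
  simp [h]

lemma apply_symmReflection_self {x : M} (h : B x x = 1) (v : M) :
    B x (B.symmReflection x v) = -B v x := by
  simp [h]

lemma apply_prod_symmReflection_left {l : List M} {y : M} (h : ∀ x ∈ l, B x y = 0) (v : M) :
    B ((l.map B.symmReflection).prod v) y = B v y := by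
  induction l with
  | nil => simp
  | cons a t ih =>
    rw [List.forall_mem_cons] at h
    rw [List.map_cons, List.prod_cons, Module.End.mul_apply, B.apply_symmReflection_left h.1,
      ih h.2]

lemma apply_prod_symmReflection_of_mem {l : List M} (hso : l.Pairwise fun x y => B y x = 0)
    (hone : ∀ x ∈ l, B x x = 1) {y : M} (hy : y ∈ l) (v : M) :
    B y ((l.map B.symmReflection).prod v) = -B v y := by
  induction l with
  | nil => simp at hy
  | cons a t ih =>
    rw [List.pairwise_cons] at hso
    rw [List.forall_mem_cons] at hone
    rw [List.map_cons, List.prod_cons, Module.End.mul_apply]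
    rcases List.mem_cons.mp hy with rfl | hyt
    · rw [B.apply_symmReflection_self hone.1, B.apply_prod_symmReflection_left hso.1]
    · rw [B.apply_symmReflection_right (hso.1 y hyt), ih hso.2 hone.2 hyt]

variable {ι : Type*} [Fintype ι] [DecidableEq ι] (b : Module.Basis ι R M)

lemma toMatrix_flip : BilinForm.toMatrix b B.flip = (BilinForm.toMatrix b B)ᵀ := by
  ext
  simp [toMatrix_apply]

lemma toMatrix_mul_toMatrix_eq_neg_transpose {f : M →ₗ[R] M}
    (h : ∀ i v, B (b i) (f v) = -B v (b i)) :
    BilinForm.toMatrix b B * LinearMap.toMatrix b b f = -(BilinForm.toMatrix b B)ᵀ := by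
  have hf : B.compRight f = -B.flip := b.ext fun i => LinearMap.ext (h i)
  rw [← toMatrix_compRight, hf, map_neg (BilinForm.toMatrix b), toMatrix_flip]

end LinearMap.BilinForm

open LinearMap.BilinForm in
theorem coxeter_symmetrized {V : Type*} [AddCommGroup V] [Module ℚ V] {n : ℕ}
    (b : Module.Basis (Fin (n + 1)) ℚ V) (χ : LinearMap.BilinForm ℚ V)
    (hso : ∀ i j : Fin (n + 1), i > j → χ (b i) (b j) = 0)
    (hone : ∀ k : Fin (n + 1), χ (b k) (b k) = 1)
    (A : Matrix (Fin (n + 1)) (Fin (n + 1)) ℚ)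
    (hA : A = Matrix.of fun i j => χ (b i) (b j))
    (I : Fin (n + 1) → V →ₗ[ℚ] V)
    (hI : ∀ j v, I j v = v - (χ v (b j) + χ (b j) v) • b j) :
    LinearMap.toMatrix b b (List.ofFn I).prod = -(A⁻¹ * Aᵀ) := by
  have hAχ : A = LinearMap.BilinForm.toMatrix b χ := by
    ext
    simp [hA, toMatrix_apply]
  have hdet : A.det = 1 := by
    rw [det_of_isUpperTriangular fun i j hij => hA ▸ hso i j hij]
    simp [hA, hone]
  have hIχ : List.ofFn I = (List.ofFn b).map (symmReflection χ) := by
    rw [List.map_ofFn]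
    exact congrArg List.ofFn (funext fun j => LinearMap.ext (hI j))
  have hAC : A * LinearMap.toMatrix b b (List.ofFn I).prod = -Aᵀ := by
    rw [hAχ, hIχ]
    refine toMatrix_mul_toMatrix_eq_neg_transpose χ b fun i v => ?_
    refine apply_prod_symmReflection_of_mem χ ?_ ?_ (List.mem_ofFn.mpr ⟨i, rfl⟩) v
    · exact List.pairwise_ofFn.mpr fun i j hij => hso j i hij
    · exact List.forall_mem_ofFn_iff.mpr hone
  rw [← Matrix.mul_neg, ← hAC, ← Matrix.mul_assoc, nonsing_inv_mul A (by simp [hdet]),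
    Matrix.one_mul]
end

section
/- Let V be a finite-dimensional vector space with a bilinear form χ, and let v_0,…,v_n be a semiorthonormal basis with Gram matrix A. Let χ_a be the alternation χ_a(w1,w2)=χ(w1,w2)−χ(w2,w1), and let I_j : v ↦ v + χ_a(v,v_j)v_j be the symplectic transvection with respect to v_j. Then the matrix of I_0 I_1 ⋯ I_n in this basis equals A⁻¹Aᵗ. -/
/-!
Let `T_j` be the matrix of `I_j` and let `B_m` be the matrix whose first `m` rows are those of
`Aᵀ` and whose remaining rows are those of `A`. Since `A` is upper unitriangular, the `j`-th column
of `B_j` is the unit vector `e_j`, so `B_j T_j = B_j + e_j (Aᵀ - A)_j = B_{j+1}`: multiplying by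
`T_j` swaps row `j` of `A` for row `j` of `Aᵀ`. Hence `A T_0 ⋯ T_n = Aᵀ`, and `det A = 1`.
-/

open Matrix

namespace Matrix

variable {R : Type*} {n : ℕ}

def transposeFirstRows (A : Matrix (Fin n) (Fin n) R) (m : ℕ) : Matrix (Fin n) (Fin n) R :=
  of fun i k => if (i : ℕ) < m then A k i else A i k

@[simp]
theorem transposeFirstRows_zero (A : Matrix (Fin n) (Fin n) R) : transposeFirstRows A 0 = A := by
  ext i k
  simp [transposeFirstRows]

theorem transposeFirstRows_of_le (A : Matrix (Fin n) (Fin n) R) {m : ℕ} (hm : n ≤ m) :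
    transposeFirstRows A m = Aᵀ := by
  ext i k
  simp [transposeFirstRows, i.is_lt.trans_le hm]

variable [CommRing R]

/-- The matrix of `v ↦ v + χ_a(v, v_j) v_j` when `A` is the Gram matrix of `χ`. -/
def alternatedTransvection (A : Matrix (Fin n) (Fin n) R) (j : Fin n) : Matrix (Fin n) (Fin n) R :=
  1 + single j j 1 * (Aᵀ - A)

theorem transposeFirstRows_mul_single {A : Matrix (Fin n) (Fin n) R} (hA : A.IsUpperTriangular)
    (hdiag : ∀ i, A i i = 1) (j : Fin n) :
    transposeFirstRows A j * single j j 1 = single j j 1 := by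
  ext i k
  by_cases hk : k = j
  · subst hk
    rw [mul_single_apply_same, mul_one, transposeFirstRows, of_apply, single_apply]
    rcases lt_trichotomy i k with h | rfl | h
    · simp [h, h.ne', hA h]
    · simp [hdiag]
    · simp [h.not_gt, h.ne, hA h]
  · simp [hk, Ne.symm hk]

theorem transposeFirstRows_add_single_mul (A : Matrix (Fin n) (Fin n) R) (j : Fin n) :
    transposeFirstRows A j + single j j 1 * (Aᵀ - A) = transposeFirstRows A (j + 1) := by
  ext i k
  by_cases hi : i = j
  · subst hi
    simp [transposeFirstRows]
  · have hlt : (i : ℕ) < j + 1 ↔ (i : ℕ) < j := by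
      have := Fin.val_ne_of_ne hi
      omega
    rw [add_apply, single_mul_apply_of_ne _ _ _ _ _ hi, add_zero, transposeFirstRows,
      transposeFirstRows, of_apply, of_apply]
    simp only [hlt]

theorem transposeFirstRows_mul_alternatedTransvection {A : Matrix (Fin n) (Fin n) R}
    (hA : A.IsUpperTriangular) (hdiag : ∀ i, A i i = 1) (j : Fin n) :
    transposeFirstRows A j * alternatedTransvection A j = transposeFirstRows A (j + 1) := by
  rw [alternatedTransvection, mul_add, mul_one, ← mul_assoc,
    transposeFirstRows_mul_single hA hdiag, transposeFirstRows_add_single_mul]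

theorem mul_prod_take_alternatedTransvection {A : Matrix (Fin n) (Fin n) R}
    (hA : A.IsUpperTriangular) (hdiag : ∀ i, A i i = 1) :
    ∀ m (hm : m ≤ n),
      A * (List.ofFn fun j : Fin m => alternatedTransvection A (Fin.castLE hm j)).prod =
        transposeFirstRows A m
  | 0, _ => by simp
  | m + 1, hm => by
    simp only [List.ofFn_succ', List.prod_concat, ← mul_assoc, Fin.castLE_castSucc,
      mul_prod_take_alternatedTransvection hA hdiag m]
    exact transposeFirstRows_mul_alternatedTransvection hA hdiag ⟨m, hm⟩

theorem mul_prod_alternatedTransvection {A : Matrix (Fin n) (Fin n) R}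
    (hA : A.IsUpperTriangular) (hdiag : ∀ i, A i i = 1) :
    A * (List.ofFn (alternatedTransvection A)).prod = Aᵀ := by
  simpa [transposeFirstRows_of_le A le_rfl] using
    mul_prod_take_alternatedTransvection hA hdiag n le_rfl

theorem prod_alternatedTransvection {A : Matrix (Fin n) (Fin n) R}
    (hA : A.IsUpperTriangular) (hdiag : ∀ i, A i i = 1) :
    (List.ofFn (alternatedTransvection A)).prod = A⁻¹ * Aᵀ := by
  have hdet : A.det = 1 := by
    rw [det_of_isUpperTriangular hA]
    exact Finset.prod_eq_one fun i _ => hdiag i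
  rw [← mul_prod_alternatedTransvection hA hdiag,
    nonsing_inv_mul_cancel_left _ _ (by simp [hdet])]

end Matrix

namespace LinearMap

theorem toMatrix_list_prod {R V ι : Type*} [CommRing R] [AddCommGroup V] [Module R V]
    [Fintype ι] [DecidableEq ι] (b : Module.Basis ι R V) (l : List (V →ₗ[R] V)) :
    toMatrix b b l.prod = (l.map (toMatrix b b)).prod :=
  map_list_prod (toMatrixAlgEquiv b) l

theorem toMatrix_eq_alternatedTransvection {R V : Type*} [CommRing R] [AddCommGroup V]
    [Module R V] {n : ℕ} (b : Module.Basis (Fin n) R V) (χ : LinearMap.BilinForm R V)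
    {f : V →ₗ[R] V} {j : Fin n} (hf : ∀ v, f v = v + (χ v (b j) - χ (b j) v) • b j) :
    toMatrix b b f = (LinearMap.BilinForm.toMatrix b χ).alternatedTransvection j := by
  ext k i
  rw [toMatrix_apply, hf]
  by_cases hk : k = j
  · subst hk
    simp [alternatedTransvection, Finsupp.single_apply, one_apply, eq_comm]
  · simp [alternatedTransvection, Finsupp.single_apply, one_apply, hk, eq_comm]

end LinearMap

theorem coxeter_alternated {V : Type*} [AddCommGroup V] [Module ℚ V] {n : ℕ}
    (b : Module.Basis (Fin (n + 1)) ℚ V) (χ : LinearMap.BilinForm ℚ V)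
    (hso : ∀ i j : Fin (n + 1), i > j → χ (b i) (b j) = 0)
    (hone : ∀ k : Fin (n + 1), χ (b k) (b k) = 1)
    (A : Matrix (Fin (n + 1)) (Fin (n + 1)) ℚ)
    (hA : A = Matrix.of fun i j => χ (b i) (b j))
    (I : Fin (n + 1) → V →ₗ[ℚ] V)
    (hI : ∀ j v, I j v = v + (χ v (b j) - χ (b j) v) • b j) :
    LinearMap.toMatrix b b (List.ofFn I).prod = A⁻¹ * Aᵀ := by
  obtain rfl : A = LinearMap.BilinForm.toMatrix b χ := by
    ext
    simp [hA]
  have hupper : (LinearMap.BilinForm.toMatrix b χ).IsUpperTriangular := fun i j hij => by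
    simpa using hso i j hij
  have hdiag : ∀ i, LinearMap.BilinForm.toMatrix b χ i i = 1 := fun i => by simpa using hone i
  have hmatrix : ∀ j, LinearMap.toMatrix b b (I j) =
      (LinearMap.BilinForm.toMatrix b χ).alternatedTransvection j := fun j =>
    LinearMap.toMatrix_eq_alternatedTransvection b χ (hI j)
  rw [LinearMap.toMatrix_list_prod, List.map_ofFn, Function.comp_def]
  simp only [hmatrix]
  exact prod_alternatedTransvection hupper hdiag
end
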